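/- arXiv:2507.04470 — 2 statements merged into one kernel-verified Lean document; each statement's English description precedes it below -/
import Mathlib

section
/- Let 0 < σ ≤ 1, q = np/(n − σp), α = (1−σ)q/p, and Λ* = −(1−α)(n−1−α(p−1)). Let U : (0,∞) → (0,∞) be three times continuously differentiable with U'(r) < 0 for all r > 0, and suppose U solves the radial equation −(r^{n−1}|U'(r)|^{p−2}U'(r))' = r^{n−1+(σ−1)q} U(r)^{q−1} on (0,∞). Set W(r) = |U'(r)|^{p−2} and f(r) = r^α U'(r). Then for every r > 0: −(p−1)[ W(r) f''(r) + ((n−1)/r) W(r) f'(r) + W'(r) f'(r) ] − (q−1) r^{(σ−1)q} U(r)^{q−2} f(r) = Λ* W(r) f(r) / r². -/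
open MeasureTheory ENNReal Set Filter Topology
open scoped RealInnerProductSpace NNReal

noncomputable section
attribute [local instance] Classical.propDecidable

abbrev Euc (n : ℕ) := EuclideanSpace ℝ (Fin n)

/-- The unit sphere `S^{n-1}` in `ℝ^n`. -/
def unitSphere (n : ℕ) : Set (Euc n) := Metric.sphere 0 1

/-- The open cone `Σ_D = {t y : y ∈ D, t > 0}` spanned by `D`. -/
def cone {n : ℕ} (D : Set (Euc n)) : Set (Euc n) :=
  {x | ∃ y ∈ D, ∃ t : ℝ, 0 < t ∧ x = t • y}

/-- `D` is an open subset of the unit sphere (in the relative topology). -/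
def IsOpenInSphere {n : ℕ} (D : Set (Euc n)) : Prop :=
  D ⊆ unitSphere n ∧ ∃ U : Set (Euc n), IsOpen U ∧ D = U ∩ unitSphere n

/-- `g` is the distributional gradient of `u` on the open set `Ω`. -/
def HasGradOn {n : ℕ} (Ω : Set (Euc n)) (u : Euc n → ℝ) (g : Euc n → Euc n) : Prop :=
  ∀ φ : Euc n → ℝ, ContDiff ℝ (⊤ : ℕ∞) φ → HasCompactSupport φ → tsupport φ ⊆ Ω →
    ∀ v : Euc n, (∫ x in Ω, u x * fderiv ℝ φ x v) = - ∫ x in Ω, ⟪g x, v⟫ * φ x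

/-- The weighted norm `‖ |x|^{σ-1} u ‖_{L_q(Ω)}`. -/
def wNorm {n : ℕ} (Ω : Set (Euc n)) (σ q : ℝ) (u : Euc n → ℝ) : ℝ≥0∞ :=
  eLpNorm (fun x => ‖x‖ ^ (σ - 1) * u x) (ENNReal.ofReal q) (volume.restrict Ω)

/-- The norm `‖g‖_{L_p(Ω)}` of a vector field. -/
def gradNorm {n : ℕ} (Ω : Set (Euc n)) (p : ℝ) (g : Euc n → Euc n) : ℝ≥0∞ :=
  eLpNorm g (ENNReal.ofReal p) (volume.restrict Ω)

/-- `u`, together with its distributional gradient `g`, belongs to `𝒟_p(Ω)`. -/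
def memD {n : ℕ} (Ω : Set (Euc n)) (p σ q : ℝ) (u : Euc n → ℝ) (g : Euc n → Euc n) : Prop :=
  HasGradOn Ω u g ∧ wNorm Ω σ q u < ⊤ ∧ gradNorm Ω p g < ⊤

/-- The Hardy–Sobolev quotient `Q^σ_Ω(u) = ‖∇u‖_p^p / ‖ |x|^{σ-1}u ‖_q^p`. -/
def HSquot {n : ℕ} (Ω : Set (Euc n)) (p σ q : ℝ) (u : Euc n → ℝ) (g : Euc n → Euc n) : ℝ :=
  (gradNorm Ω p g).toReal ^ p / (wNorm Ω σ q u).toReal ^ p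

/-- The sharp Hardy–Sobolev constant `S^σ_Ω`. -/
def HSconst {n : ℕ} (Ω : Set (Euc n)) (p σ q : ℝ) : ℝ :=
  sInf {c | ∃ u g, memD Ω p σ q u g ∧ wNorm Ω σ q u ≠ 0 ∧ c = HSquot Ω p σ q u g}

/-- The surface measure on the unit sphere, normalized so that the total mass of the
sphere is `n` times the volume of the unit ball. -/
def sphereMeasure (n : ℕ) : Measure (Euc n) :=
  (n : ℝ≥0∞) • Measure.map (fun x : Euc n => ‖x‖⁻¹ • x)
    (volume.restrict (Metric.ball (0 : Euc n) 1 \ {0}))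

/-- Near `y`, `Ω` is (in suitable local coordinates) the open region above the graph of a
Lipschitz function; in particular the boundary of `Ω` is a Lipschitz graph near `y`. -/
def IsLipschitzGraphDomainAt {n : ℕ} (Ω : Set (Euc n)) (y : Euc n) : Prop :=
  ∃ (ν : Euc n) (f : Euc n → ℝ) (L : ℝ≥0) (ε : ℝ), ‖ν‖ = 1 ∧ 0 < ε ∧ LipschitzWith L f ∧
    Ω ∩ Metric.ball y ε = {x | f (x - ⟪x, ν⟫ • ν) < ⟪x, ν⟫} ∩ Metric.ball y ε

/-- Near `y`, `Ω` is (in suitable local coordinates) the open region above the graph of a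
`C¹` function; in particular the boundary of `Ω` is a `C¹` graph near `y`. -/
def IsC1GraphDomainAt {n : ℕ} (Ω : Set (Euc n)) (y : Euc n) : Prop :=
  ∃ (ν : Euc n) (f : Euc n → ℝ) (ε : ℝ), ‖ν‖ = 1 ∧ 0 < ε ∧ ContDiff ℝ 1 f ∧
    Ω ∩ Metric.ball y ε = {x | f (x - ⟪x, ν⟫ • ν) < ⟪x, ν⟫} ∩ Metric.ball y ε

/-- `D ⊆ S^{n-1}` has strictly Lipschitz boundary: near each of its nonzero points, the
boundary of the cone `Σ_D` is the graph of a Lipschitz function in suitable coordinates. -/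
def StrictLipschitzBoundary {n : ℕ} (D : Set (Euc n)) : Prop :=
  ∀ y ∈ frontier (cone D), y ≠ 0 → IsLipschitzGraphDomainAt (cone D) y

/-- `D ⊆ S^{n-1}` has `C¹` boundary: near each of its nonzero points, the boundary of the
cone `Σ_D` is the graph of a `C¹` function in suitable coordinates. -/
def C1Boundary {n : ℕ} (D : Set (Euc n)) : Prop :=
  ∀ y ∈ frontier (cone D), y ≠ 0 → IsC1GraphDomainAt (cone D) y

/-- `g` is positively `0`-homogeneous away from the origin. -/
def IsZeroHomog {n : ℕ} (g : Euc n → ℝ) : Prop :=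
  ∀ t : ℝ, 0 < t → ∀ x : Euc n, x ≠ 0 → g (t • x) = g x

/-- The first nonzero Neumann eigenvalue of the Laplace–Beltrami operator on `D`,
defined variationally (test functions are realized as positively `0`-homogeneous `C¹`
functions on the closed cone minus the origin; their Euclidean gradient on the sphere is
the tangential gradient). -/
def lambdaOne {n : ℕ} (D : Set (Euc n)) : ℝ :=
  sInf {c | ∃ g : Euc n → ℝ, ContDiffOn ℝ 1 g (closure (cone D) \ {0}) ∧ IsZeroHomog g ∧
    (∫ x in D, g x ∂sphereMeasure n) = 0 ∧ (∫ x in D, (g x) ^ 2 ∂sphereMeasure n) ≠ 0 ∧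
    c = (∫ x in D, ‖gradient g x‖ ^ 2 ∂sphereMeasure n) /
        (∫ x in D, (g x) ^ 2 ∂sphereMeasure n)}

/-- The energy functional `J^σ(u) = (1/p)∫|∇u|^p - (1/q)∫ |x|^{(σ-1)q}|u|^q`. -/
def Jfun {n : ℕ} (Ω : Set (Euc n)) (p σ q : ℝ) (u : Euc n → ℝ) (g : Euc n → Euc n) : ℝ :=
  (1 / p) * (∫ x in Ω, ‖g x‖ ^ p) - (1 / q) * ∫ x in Ω, ‖x‖ ^ ((σ - 1) * q) * |u x| ^ q

/-- Membership in the Nehari manifold `𝒩^σ(Ω)`. -/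
def Nehari {n : ℕ} (Ω : Set (Euc n)) (p σ q : ℝ) (u : Euc n → ℝ) (g : Euc n → Euc n) : Prop :=
  wNorm Ω σ q u ≠ 0 ∧
    (∫ x in Ω, ‖g x‖ ^ p) = ∫ x in Ω, ‖x‖ ^ ((σ - 1) * q) * |u x| ^ q

/-- The one-point compactification `Σ̄_D` of the closed cone over `D`. -/
def ConeComp (n : ℕ) (D : Set (Euc n)) : Type := OnePoint ↥(closure (cone D))

instance (n : ℕ) (D : Set (Euc n)) : TopologicalSpace (ConeComp n D) :=
  inferInstanceAs (TopologicalSpace (OnePoint ↥(closure (cone D))))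

instance (n : ℕ) (D : Set (Euc n)) : MeasurableSpace (ConeComp n D) :=
  borel (ConeComp n D)

instance (n : ℕ) (D : Set (Euc n)) : BorelSpace (ConeComp n D) := ⟨rfl⟩

/-- The canonical map from `ℝ^n` to the compactified cone `Σ̄_D` (points outside the
closed cone are sent to `∞`; only its restriction to the cone is ever used). -/
def conePt {n : ℕ} (D : Set (Euc n)) (x : Euc n) : ConeComp n D :=
  if h : x ∈ closure (cone D) then (OnePoint.some ⟨x, h⟩ : OnePoint ↥(closure (cone D)))
  else OnePoint.infty

/-- The point `∞` of the compactified cone. -/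
def coneInfty (n : ℕ) (D : Set (Euc n)) : ConeComp n D :=
  (OnePoint.infty : OnePoint ↥(closure (cone D)))

/-- The function `f(r) = r^α U'(r)`, with `α = (1-σ)q/p`, solves the
linearized radial equation with `Λ* = -(1-α)(n-1-α(p-1))`, whenever `U` is a decreasing
positive radial solution of the Hardy–Sobolev Euler–Lagrange equation. -/
theorem statement4 (n : ℕ) (hn : 2 ≤ n) (p σ q α Λ : ℝ) (hp1 : 1 < p) (hpn : p < (n : ℝ))
    (hσ0 : 0 < σ) (hσ1 : σ ≤ 1) (hq : q = n * p / (n - σ * p))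
    (hα : α = (1 - σ) * q / p) (hΛ : Λ = -((1 - α) * ((n : ℝ) - 1 - α * (p - 1))))
    (U : ℝ → ℝ) (hU3 : ContDiffOn ℝ 3 U (Set.Ioi 0))
    (hUpos : ∀ r ∈ Set.Ioi (0 : ℝ), 0 < U r) (hU' : ∀ r ∈ Set.Ioi (0 : ℝ), deriv U r < 0)
    (hODE : ∀ r ∈ Set.Ioi (0 : ℝ),
      deriv (fun s => s ^ ((n : ℝ) - 1) * |deriv U s| ^ (p - 2) * deriv U s) r
        = -(r ^ ((n : ℝ) - 1 + (σ - 1) * q) * (U r) ^ (q - 1)))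
    (W f : ℝ → ℝ) (hW : W = fun s => |deriv U s| ^ (p - 2))
    (hf : f = fun s => s ^ α * deriv U s) :
    ∀ r ∈ Set.Ioi (0 : ℝ),
      -(p - 1) * (W r * deriv (deriv f) r + (((n : ℝ) - 1) / r) * W r * deriv f r
          + deriv W r * deriv f r)
        - (q - 1) * r ^ ((σ - 1) * q) * (U r) ^ (q - 2) * f r
        = Λ * W r * f r / r ^ 2 := by
  intro r hr
  have hr0 : (0:ℝ) < r := hr
  have hrne : r ≠ 0 := ne_of_gt hr0
  have hp0 : p ≠ 0 := by linarith
  -- differentiability facts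
  have hUdiff : ∀ s ∈ Set.Ioi (0:ℝ), HasDerivAt U (deriv U s) s := fun s hs =>
    ((hU3.differentiableOn (by norm_num)).differentiableAt
      (isOpen_Ioi.mem_nhds hs)).hasDerivAt
  have hvC : ContDiffOn ℝ 2 (deriv U) (Set.Ioi 0) :=
    hU3.deriv_of_isOpen isOpen_Ioi (by norm_num)
  have hv1C : ContDiffOn ℝ 1 (deriv (deriv U)) (Set.Ioi 0) :=
    hvC.deriv_of_isOpen isOpen_Ioi (by norm_num)
  have hvd : ∀ s ∈ Set.Ioi (0:ℝ), HasDerivAt (deriv U) (deriv (deriv U) s) s := fun s hs =>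
    ((hvC.differentiableOn (by norm_num)).differentiableAt
      (isOpen_Ioi.mem_nhds hs)).hasDerivAt
  have hv1d : ∀ s ∈ Set.Ioi (0:ℝ), HasDerivAt (deriv (deriv U)) (deriv (deriv (deriv U)) s) s :=
    fun s hs => ((hv1C.differentiableOn (by norm_num)).differentiableAt
      (isOpen_Ioi.mem_nhds hs)).hasDerivAt
  have hneg : ∀ s ∈ Set.Ioi (0:ℝ), (0:ℝ) < -(deriv U s) := fun s hs => neg_pos.2 (hU' s hs)
  have habs : ∀ s ∈ Set.Ioi (0:ℝ), |deriv U s| = -(deriv U s) := fun s hs => abs_of_neg (hU' s hs)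
  -- derivative of A s = (-(U' s))^(p-1)
  have hdA : ∀ s ∈ Set.Ioi (0:ℝ), HasDerivAt (fun t => (-(deriv U t)) ^ (p-1))
      (-(deriv (deriv U) s) * (p-1) * (-(deriv U s)) ^ (p-2)) s := by
    intro s hs
    have h := ((hvd s hs).neg).rpow_const (p := p-1) (Or.inl (ne_of_gt (hneg s hs)))
    rwa [show p-1-1 = p-2 by ring] at h
  -- derivative of B s = (-(U' s))^(p-2)
  have hdB : ∀ s ∈ Set.Ioi (0:ℝ), HasDerivAt (fun t => (-(deriv U t)) ^ (p-2))
      (-(deriv (deriv U) s) * (p-2) * (-(deriv U s)) ^ (p-3)) s := by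
    intro s hs
    have h := ((hvd s hs).neg).rpow_const (p := p-2) (Or.inl (ne_of_gt (hneg s hs)))
    rwa [show p-2-1 = p-3 by ring] at h
  -- first derivative of f
  have hdf : ∀ s ∈ Set.Ioi (0:ℝ), HasDerivAt (fun t => t ^ α * deriv U t)
      (α * s ^ (α-1) * deriv U s + s ^ α * deriv (deriv U) s) s := by
    intro s hs
    have h1 : HasDerivAt (fun t : ℝ => t ^ α) (α * s ^ (α-1)) s :=
      Real.hasDerivAt_rpow_const (Or.inl (ne_of_gt hs))
    exact h1.mul (hvd s hs)
  -- the radial ODE, rearranged (E1)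
  have hE1f : ∀ s ∈ Set.Ioi (0:ℝ), ((n:ℝ)-1) * (-(deriv U s)) ^ (p-1)
      = ((p-1) * (-(deriv U s)) ^ (p-2) * deriv (deriv U) s
          + s ^ ((σ-1)*q) * (U s) ^ (q-1)) * s := by
    intro s hs
    have hode := hODE s hs
    have hGeq : Set.EqOn (fun t => t ^ ((n:ℝ) - 1) * |deriv U t| ^ (p - 2) * deriv U t)
        (fun t => -(t ^ ((n:ℝ)-1) * (-(deriv U t)) ^ (p-1))) (Set.Ioi 0) := by
      intro t ht
      have h2 : (-(deriv U t)) ^ (p-1) = (-(deriv U t)) ^ (p-2) * (-(deriv U t)) := by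
        rw [show p-1 = p-2+1 by ring, Real.rpow_add_one (ne_of_gt (hneg t ht))]
      simp only [habs t ht, h2]
      ring
    rw [Filter.EventuallyEq.deriv_eq (hGeq.eventuallyEq_of_mem (isOpen_Ioi.mem_nhds hs))] at hode
    have h1 : HasDerivAt (fun t : ℝ => t ^ ((n:ℝ)-1)) (((n:ℝ)-1) * s ^ ((n:ℝ)-2)) s := by
      have h := Real.hasDerivAt_rpow_const (x := s) (p := (n:ℝ)-1) (Or.inl (ne_of_gt hs))
      rwa [show (n:ℝ)-1-1 = (n:ℝ)-2 by ring] at h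
    have hG : HasDerivAt (fun t => -(t ^ ((n:ℝ)-1) * (-(deriv U t)) ^ (p-1)))
        (-(((n:ℝ)-1) * s ^ ((n:ℝ)-2) * (-(deriv U s)) ^ (p-1)
          + s ^ ((n:ℝ)-1) * (-(deriv (deriv U) s) * (p-1) * (-(deriv U s)) ^ (p-2)))) s :=
      (h1.mul (hdA s hs)).neg
    rw [hG.deriv] at hode
    have e2 : s ^ ((n:ℝ)-1) = s ^ ((n:ℝ)-2) * s := by
      have h := Real.rpow_add_one (ne_of_gt hs) ((n:ℝ)-2)
      rwa [show (n:ℝ)-2+1 = (n:ℝ)-1 by ring] at h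
    have e3 : s ^ ((n:ℝ)-1+(σ-1)*q) = s ^ ((n:ℝ)-1) * s ^ ((σ-1)*q) := Real.rpow_add hs _ _
    rw [e3, e2] at hode
    have hpow : (0:ℝ) < s ^ ((n:ℝ)-2) := Real.rpow_pos_of_pos hs _
    apply mul_left_cancel₀ (ne_of_gt hpow)
    linear_combination -hode
  -- differentiate E1 to get E2
  have hE2r : ((n:ℝ)-1) * (-(deriv (deriv U) r) * (p-1) * (-(deriv U r)) ^ (p-2))
      = ((p-1) * (-(deriv (deriv U) r) * (p-2) * (-(deriv U r)) ^ (p-3)) * deriv (deriv U) r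
          + (p-1) * (-(deriv U r)) ^ (p-2) * deriv (deriv (deriv U)) r
          + (((σ-1)*q * r ^ ((σ-1)*q - 1)) * (U r) ^ (q-1)
            + r ^ ((σ-1)*q) * (deriv U r * (q-1) * (U r) ^ (q-2)))) * r
        + ((p-1) * (-(deriv U r)) ^ (p-2) * deriv (deriv U) r
            + r ^ ((σ-1)*q) * (U r) ^ (q-1)) * 1 := by
    have hPhi : HasDerivAt (fun s => ((n:ℝ)-1) * (-(deriv U s)) ^ (p-1))
        (((n:ℝ)-1) * (-(deriv (deriv U) r) * (p-1) * (-(deriv U r)) ^ (p-2))) r :=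
      (hdA r hr).const_mul ((n:ℝ)-1)
    have hs1 : HasDerivAt (fun s => (p-1) * (-(deriv U s)) ^ (p-2))
        ((p-1) * (-(deriv (deriv U) r) * (p-2) * (-(deriv U r)) ^ (p-3))) r :=
      (hdB r hr).const_mul (p-1)
    have hs2 := hs1.mul (hv1d r hr)
    have hs3 : HasDerivAt (fun s : ℝ => s ^ ((σ-1)*q)) ((σ-1)*q * r ^ ((σ-1)*q - 1)) r :=
      Real.hasDerivAt_rpow_const (Or.inl hrne)
    have hs4 : HasDerivAt (fun s => (U s) ^ (q-1))
        (deriv U r * (q-1) * (U r) ^ (q-2)) r := by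
      have h := (hUdiff r hr).rpow_const (p := q-1) (Or.inl (ne_of_gt (hUpos r hr)))
      rwa [show q-1-1 = q-2 by ring] at h
    have hs5 := hs3.mul hs4
    have hPsi : HasDerivAt (fun s => ((p-1) * (-(deriv U s)) ^ (p-2) * deriv (deriv U) s
          + s ^ ((σ-1)*q) * (U s) ^ (q-1)) * s)
        (((p-1) * (-(deriv (deriv U) r) * (p-2) * (-(deriv U r)) ^ (p-3)) * deriv (deriv U) r
          + (p-1) * (-(deriv U r)) ^ (p-2) * deriv (deriv (deriv U)) r
          + (((σ-1)*q * r ^ ((σ-1)*q - 1)) * (U r) ^ (q-1)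
            + r ^ ((σ-1)*q) * (deriv U r * (q-1) * (U r) ^ (q-2)))) * r
          + ((p-1) * (-(deriv U r)) ^ (p-2) * deriv (deriv U) r
              + r ^ ((σ-1)*q) * (U r) ^ (q-1)) * 1) r := by
      have h := (hs2.add hs5).mul (hasDerivAt_id r)
      exact h
    have heq : Set.EqOn (fun s => ((n:ℝ)-1) * (-(deriv U s)) ^ (p-1))
        (fun s => ((p-1) * (-(deriv U s)) ^ (p-2) * deriv (deriv U) s
          + s ^ ((σ-1)*q) * (U s) ^ (q-1)) * s) (Set.Ioi 0) := fun s hs => hE1f s hs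
    have hde := Filter.EventuallyEq.deriv_eq (heq.eventuallyEq_of_mem (isOpen_Ioi.mem_nhds hr))
    rw [hPhi.deriv, hPsi.deriv] at hde
    exact hde
  -- rewrite the goal
  subst hΛ
  simp only [hW, hf]
  have hdWr : deriv (fun s => |deriv U s| ^ (p-2)) r
      = -(deriv (deriv U) r) * (p-2) * (-(deriv U r)) ^ (p-3) := by
    have hWB : Set.EqOn (fun s => |deriv U s| ^ (p-2)) (fun t => (-(deriv U t)) ^ (p-2))
        (Set.Ioi 0) := fun s hs => by
      show |deriv U s| ^ (p-2) = (-(deriv U s)) ^ (p-2)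
      rw [habs s hs]
    rw [Filter.EventuallyEq.deriv_eq (hWB.eventuallyEq_of_mem (isOpen_Ioi.mem_nhds hr))]
    exact (hdB r hr).deriv
  have hf1r : deriv (fun s => s ^ α * deriv U s) r
      = α * r ^ (α-1) * deriv U r + r ^ α * deriv (deriv U) r := (hdf r hr).deriv
  have hf2r : deriv (deriv (fun s => s ^ α * deriv U s)) r
      = (α * ((α-1) * r ^ (α-2))) * deriv U r + (α * r ^ (α-1)) * deriv (deriv U) r
        + ((α * r ^ (α-1)) * deriv (deriv U) r + r ^ α * deriv (deriv (deriv U)) r) := by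
    have heq : Set.EqOn (deriv (fun s => s ^ α * deriv U s))
        (fun s => α * s ^ (α-1) * deriv U s + s ^ α * deriv (deriv U) s) (Set.Ioi 0) :=
      fun s hs => (hdf s hs).deriv
    rw [Filter.EventuallyEq.deriv_eq (heq.eventuallyEq_of_mem (isOpen_Ioi.mem_nhds hr))]
    have h1 : HasDerivAt (fun s : ℝ => α * s ^ (α-1)) (α * ((α-1) * r ^ (α-2))) r := by
      have h := (Real.hasDerivAt_rpow_const (x := r) (p := α-1) (Or.inl hrne)).const_mul α
      rwa [show α-1-1 = α-2 by ring] at h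
    have h2 : HasDerivAt (fun s : ℝ => s ^ α) (α * r ^ (α-1)) r :=
      Real.hasDerivAt_rpow_const (Or.inl hrne)
    exact ((h1.mul (hvd r hr)).add (h2.mul (hv1d r hr))).deriv
  rw [hdWr, hf1r, hf2r, habs r hr]
  rw [eq_div_iff (by positivity : (r:ℝ)^2 ≠ 0)]
  -- algebraic identities
  have hαp : α * p = (1-σ) * q := by rw [hα]; field_simp
  have hinv : r * r⁻¹ = 1 := mul_inv_cancel₀ hrne
  have hvne : -(deriv U r) ≠ 0 := ne_of_gt (hneg r hr)
  have hA_r : (-(deriv U r)) ^ (p-1) = (-(deriv U r)) ^ (p-2) * (-(deriv U r)) := by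
    rw [show p-1 = p-2+1 by ring, Real.rpow_add_one hvne]
  have hB_r : (-(deriv U r)) ^ (p-2) = (-(deriv U r)) ^ (p-3) * (-(deriv U r)) := by
    rw [show p-2 = p-3+1 by ring, Real.rpow_add_one hvne]
  have hP_r : r ^ α = r ^ (α-1) * r := by
    have h := Real.rpow_add_one hrne (α-1)
    rwa [show α-1+1 = α by ring] at h
  have hP1_r : r ^ (α-1) = r ^ (α-2) * r := by
    have h := Real.rpow_add_one hrne (α-2)
    rwa [show α-2+1 = α-1 by ring] at h
  have hR_r : r ^ ((σ-1)*q) = r ^ ((σ-1)*q - 1) * r := by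
    have h := Real.rpow_add_one hrne ((σ-1)*q - 1)
    rwa [show (σ-1)*q-1+1 = (σ-1)*q by ring] at h
  have hE1r := hE1f r hr
  linear_combination
        ((-1)*r*(deriv (deriv U) r)*((-(deriv U r)) ^ (p-2))*(r ^ α) + (-1)*α*r*(deriv U r)*((-(deriv U r)) ^ (p-2))*(r ^ (α-1)) + p*r*(deriv (deriv U) r)*((-(deriv U r)) ^ (p-2))*(r ^ α) + p*α*r*(deriv U r)*((-(deriv U r)) ^ (p-2))*(r ^ (α-1)) + (n:ℝ)*r*(deriv (deriv U) r)*((-(deriv U r)) ^ (p-2))*(r ^ α) + (n:ℝ)*α*r*(deriv U r)*((-(deriv U r)) ^ (p-2))*(r ^ (α-1)) + (-1)*(n:ℝ)*p*r*(deriv (deriv U) r)*((-(deriv U r)) ^ (p-2))*(r ^ α) + (-1)*(n:ℝ)*p*α*r*(deriv U r)*((-(deriv U r)) ^ (p-2))*(r ^ (α-1))) * hinv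
      + (r*(r ^ α)) * hE2r
      + (q*r*(r ^ α)*((U r) ^ (q-1)) + (-1)*σ*q*r*(r ^ α)*((U r) ^ (q-1))) * hR_r
      + ((-1)*(r ^ α) + q*(r ^ α) + (-1)*σ*q*(r ^ α)) * hE1r
      + ((-1)*(r ^ α) + q*(r ^ α) + (-1)*σ*q*(r ^ α) + (n:ℝ)*(r ^ α) + (-1)*(n:ℝ)*q*(r ^ α) + (n:ℝ)*σ*q*(r ^ α)) * hA_r
      + ((2)*α*(deriv U r)*((-(deriv U r)) ^ (p-2)) + (-1)*α^2*(deriv U r)*((-(deriv U r)) ^ (p-2)) + (-1)*q*(deriv U r)*((-(deriv U r)) ^ (p-2)) + (-1)*q*r*(deriv (deriv U) r)*((-(deriv U r)) ^ (p-2)) + σ*q*(deriv U r)*((-(deriv U r)) ^ (p-2)) + σ*q*r*(deriv (deriv U) r)*((-(deriv U r)) ^ (p-2)) + (-1)*p*α*(deriv U r)*((-(deriv U r)) ^ (p-2)) + p*α^2*(deriv U r)*((-(deriv U r)) ^ (p-2)) + p*q*r*(deriv (deriv U) r)*((-(deriv U r)) ^ (p-2)) + (-1)*p*σ*q*r*(deriv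 (deriv U) r)*((-(deriv U r)) ^ (p-2)) + (-1)*(n:ℝ)*α*(deriv U r)*((-(deriv U r)) ^ (p-2)) + (n:ℝ)*q*(deriv U r)*((-(deriv U r)) ^ (p-2)) + (-1)*(n:ℝ)*σ*q*(deriv U r)*((-(deriv U r)) ^ (p-2))) * hP_r
      + (α*r*(deriv U r)*((-(deriv U r)) ^ (p-2)) + (2)*α*r^2*(deriv (deriv U) r)*((-(deriv U r)) ^ (p-2)) + (2)*α*r^2*(deriv U r)*(deriv (deriv U) r)*((-(deriv U r)) ^ (p-3)) + (-1)*α^2*r*(deriv U r)*((-(deriv U r)) ^ (p-2)) + (-1)*q*r*(deriv U r)*((-(deriv U r)) ^ (p-2)) + (-1)*q*r^2*(deriv (deriv U) r)*((-(deriv U r)) ^ (p-2)) + σ*q*r*(deriv U r)*((-(deriv U r)) ^ (p-2)) + σ*q*r^2*(deriv (deriv U) r)*((-(deriv U r)) ^ (p-2)) + (-2)*p*α*r^2*(deriv (deriv U) r)*((-(deriv U r)) ^ (p-2)) + (-3)*p*α*r^2*(deriv U r)*(deriv (deriv U) r)*((-(deriv U r)) ^ (p-3)) + p*α^2*r*(deriv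 U r)*((-(deriv U r)) ^ (p-2)) + p*q*r^2*(deriv (deriv U) r)*((-(deriv U r)) ^ (p-2)) + (-1)*p*σ*q*r^2*(deriv (deriv U) r)*((-(deriv U r)) ^ (p-2)) + p^2*α*r^2*(deriv U r)*(deriv (deriv U) r)*((-(deriv U r)) ^ (p-3)) + (n:ℝ)*q*r*(deriv U r)*((-(deriv U r)) ^ (p-2)) + (-1)*(n:ℝ)*σ*q*r*(deriv U r)*((-(deriv U r)) ^ (p-2)) + (-1)*(n:ℝ)*p*α*r*(deriv U r)*((-(deriv U r)) ^ (p-2))) * hP1_r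
      + ((2)*α*r^3*(deriv (deriv U) r)*(r ^ (α-2)) + (-1)*q*r^2*(deriv U r)*(r ^ (α-2)) + (-1)*q*r^3*(deriv (deriv U) r)*(r ^ (α-2)) + σ*q*r^2*(deriv U r)*(r ^ (α-2)) + σ*q*r^3*(deriv (deriv U) r)*(r ^ (α-2)) + p*α*r^2*(deriv U r)*(r ^ (α-2)) + (-2)*p*α*r^3*(deriv (deriv U) r)*(r ^ (α-2)) + p*q*r^3*(deriv (deriv U) r)*(r ^ (α-2)) + (-1)*p*σ*q*r^3*(deriv (deriv U) r)*(r ^ (α-2)) + (n:ℝ)*q*r^2*(deriv U r)*(r ^ (α-2)) + (-1)*(n:ℝ)*σ*q*r^2*(deriv U r)*(r ^ (α-2)) + (-1)*(n:ℝ)*p*α*r^2*(deriv U r)*(r ^ (α-2))) * hB_r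
      + ((-1)*r^2*(deriv U r)^2*((-(deriv U r)) ^ (p-3))*(r ^ (α-2)) + (-1)*r^3*(deriv U r)*(deriv (deriv U) r)*((-(deriv U r)) ^ (p-3))*(r ^ (α-2)) + p*r^3*(deriv U r)*(deriv (deriv U) r)*((-(deriv U r)) ^ (p-3))*(r ^ (α-2)) + (n:ℝ)*r^2*(deriv U r)^2*((-(deriv U r)) ^ (p-3))*(r ^ (α-2))) * hαp
end
end

section
/- Let 0 < σ ≤ 1, q = np/(n − σp), and let w(r) = (1 + r^{σ(n−p)q/(n(p−1))})^{−n/(σq)} for r > 0. There exists a constant C > 0 such that for every a > 0 the function U(r) = C a^{n/p − 1} w(ar) satisfies −(r^{n−1}|U'(r)|^{p−2}U'(r))' = r^{n−1+(σ−1)q} U(r)^{q−1} for all r > 0. -/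
open MeasureTheory ENNReal Set Filter Topology
open scoped RealInnerProductSpace NNReal

noncomputable section
attribute [local instance] Classical.propDecidable

/-- The Talenti–Bliss profiles `U(r) = C a^{n/p-1} w(ar)` solve the
radial Euler–Lagrange equation of the Hardy–Sobolev inequality, for a suitable `C > 0`
and every `a > 0`. -/
theorem statement5 (n : ℕ) (hn : 2 ≤ n) (p σ q : ℝ) (hp1 : 1 < p) (hpn : p < (n : ℝ))
    (hσ0 : 0 < σ) (hσ1 : σ ≤ 1) (hq : q = n * p / (n - σ * p))
    (w : ℝ → ℝ)
    (hw : ∀ r : ℝ, w r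
      = (1 + r ^ (σ * ((n : ℝ) - p) * q / (n * (p - 1)))) ^ (-(n : ℝ) / (σ * q))) :
    ∃ C : ℝ, 0 < C ∧ ∀ a : ℝ, 0 < a → ∀ r ∈ Set.Ioi (0 : ℝ),
      deriv (fun s => s ^ ((n : ℝ) - 1)
          * |deriv (fun t => C * a ^ ((n : ℝ) / p - 1) * w (a * t)) s| ^ (p - 2)
          * deriv (fun t => C * a ^ ((n : ℝ) / p - 1) * w (a * t)) s) r
        = -(r ^ ((n : ℝ) - 1 + (σ - 1) * q)
            * (C * a ^ ((n : ℝ) / p - 1) * w (a * r)) ^ (q - 1)) := by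
  
  obtain ⟨N, hNdef⟩ : ∃ x : ℝ, x = (n : ℝ) := ⟨_, rfl⟩
  rw [← hNdef] at hpn hq
  simp only [← hNdef] at hw ⊢
  have hN1 : (1:ℝ) < N := lt_trans hp1 hpn
  have hN0 : (0:ℝ) < N := by linarith
  have hp0 : (0:ℝ) < p := by linarith
  have hp1' : (0:ℝ) < p - 1 := by linarith
  have hNp : (0:ℝ) < N - p := by linarith
  have hden : (0:ℝ) < N - σ * p := by nlinarith
  have hq0 : (0:ℝ) < q := by rw [hq]; positivity
  have hqp : p < q := by
    rw [hq, lt_div_iff₀ hden]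
    nlinarith [mul_pos (mul_pos hσ0 hp0) hp0]
  have hNne : N ≠ 0 := hN0.ne'
  have hpne : p ≠ 0 := hp0.ne'
  have hp1ne : p - 1 ≠ 0 := hp1'.ne'
  have hσne : σ ≠ 0 := hσ0.ne'
  have hdne : N - σ * p ≠ 0 := hden.ne'
  have hqne : q ≠ 0 := hq0.ne'
  obtain ⟨A, hAdef⟩ : ∃ x : ℝ, x = σ * (N - p) * q / (N * (p - 1)) := ⟨_, rfl⟩
  obtain ⟨B, hBdef⟩ : ∃ x : ℝ, x = -N / (σ * q) := ⟨_, rfl⟩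
  simp only [← hAdef, ← hBdef] at hw
  have hA0 : 0 < A := by rw [hAdef]; positivity
  have hB0 : 0 < -B := by rw [hBdef, neg_div, neg_neg]; positivity
  obtain ⟨E, hEdef⟩ : ∃ x : ℝ, x = (A - 1) * (p - 1) := ⟨_, rfl⟩
  obtain ⟨g, hgdef⟩ : ∃ x : ℝ, x = N - 1 + E := ⟨_, rfl⟩
  obtain ⟨H, hHdef⟩ : ∃ x : ℝ, x = (B - 1) * (p - 1) := ⟨_, rfl⟩
  have I1 : g - 1 = N - 1 + (σ - 1) * q := by
    rw [hgdef, hEdef, hAdef, hq]; field_simp; ring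
  have I2 : H - 1 = B * (q - 1) := by
    rw [hHdef, hBdef, hq]; field_simp; ring
  have I3 : g + H * A = 0 := by
    rw [hgdef, hEdef, hHdef, hAdef, hBdef, hq]; field_simp; ring
  have I5 : N / p * (p - 1) + E = (N / p - 1) * (q - 1) := by
    have hdne' : N - p * σ ≠ 0 := by rwa [mul_comm p σ]
    rw [hEdef, hAdef, hq]; field_simp; ring
  have hg0 : 0 < g := by
    have : g = N - p + (p - 1) * A := by rw [hgdef, hEdef]; ring
    nlinarith [mul_pos hp1' hA0]
  obtain ⟨K0, hK0def⟩ : ∃ x : ℝ, x = (N - p) / (p - 1) := ⟨_, rfl⟩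
  have hK00 : 0 < K0 := hK0def ▸ div_pos hNp hp1'
  have hK0 : A * (-B) = K0 := by
    rw [hAdef, hBdef, hK0def, hq]; field_simp
  obtain ⟨M, hMdef⟩ : ∃ x : ℝ, x = K0 ^ (p - 1) * g := ⟨_, rfl⟩
  have hM0 : 0 < M := hMdef ▸ mul_pos (Real.rpow_pos_of_pos hK00 _) hg0
  obtain ⟨C, hCdef⟩ : ∃ x : ℝ, x = M ^ (1 / (q - p)) := ⟨_, rfl⟩
  have hC0 : 0 < C := hCdef ▸ Real.rpow_pos_of_pos hM0 _
  have hCqp : C ^ (q - p) = M := by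
    rw [hCdef, ← Real.rpow_mul hM0.le, one_div, inv_mul_cancel₀ (sub_pos.mpr hqp).ne',
      Real.rpow_one]
  refine ⟨C, hC0, ?_⟩
  intro a ha r hrIoi
  have hr0 : (0:ℝ) < r := hrIoi
  simp only [hw]
  obtain ⟨P, hPdef⟩ : ∃ x : ℝ, x = C * a ^ (N / p - 1) * (-B) * A * a := ⟨_, rfl⟩
  have haN : 0 < a ^ (N / p - 1) := Real.rpow_pos_of_pos ha _
  have hP0 : 0 < P := by rw [hPdef]; positivity
  obtain ⟨Q, hQdef⟩ : ∃ x : ℝ, x = P ^ (p - 1) * a ^ E := ⟨_, rfl⟩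
  have hQ0 : 0 < Q := by
    rw [hQdef]
    exact mul_pos (Real.rpow_pos_of_pos hP0 _) (Real.rpow_pos_of_pos ha _)
  -- derivative of the inner function
  have hderiv : ∀ s : ℝ, 0 < s →
      HasDerivAt (fun t => C * a ^ (N / p - 1) * (1 + (a * t) ^ A) ^ B)
        (-(P * ((1 + (a * s) ^ A) ^ (B - 1) * (a * s) ^ (A - 1)))) s := by
    intro s hs
    have has : 0 < a * s := mul_pos ha hs
    have h1 : HasDerivAt (fun t : ℝ => a * t) a s := by
      simpa using (hasDerivAt_id s).const_mul a
    have h2 : HasDerivAt (fun x : ℝ => x ^ A) (A * (a * s) ^ (A - 1)) (a * s) :=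
      Real.hasDerivAt_rpow_const (Or.inl has.ne')
    have h3 : HasDerivAt (fun t : ℝ => (a * t) ^ A) (A * (a * s) ^ (A - 1) * a) s := by
      simpa [Function.comp_def] using h2.comp s h1
    have h4 : HasDerivAt (fun t : ℝ => 1 + (a * t) ^ A) (A * (a * s) ^ (A - 1) * a) s :=
      h3.const_add 1
    have hpos : 0 < 1 + (a * s) ^ A := by positivity
    have h5 : HasDerivAt (fun x : ℝ => x ^ B) (B * (1 + (a * s) ^ A) ^ (B - 1))
        (1 + (a * s) ^ A) := Real.hasDerivAt_rpow_const (Or.inl hpos.ne')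
    have h6 : HasDerivAt (fun t : ℝ => (1 + (a * t) ^ A) ^ B)
        (B * (1 + (a * s) ^ A) ^ (B - 1) * (A * (a * s) ^ (A - 1) * a)) s := by
      simpa [Function.comp_def] using h5.comp s h4
    have h7 := h6.const_mul (C * a ^ (N / p - 1))
    refine h7.congr_deriv ?_
    rw [hPdef]; ring
  -- the flux function coincides with an explicit power function on Ioi 0
  have hflux : ∀ s : ℝ, 0 < s →
      s ^ (N - 1) * |deriv (fun t => C * a ^ (N / p - 1) * (1 + (a * t) ^ A) ^ B) s| ^ (p - 2)
        * deriv (fun t => C * a ^ (N / p - 1) * (1 + (a * t) ^ A) ^ B) s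
      = -(Q * (s ^ g * (1 + a ^ A * s ^ A) ^ H)) := by
    intro s hs
    have has : 0 < a * s := mul_pos ha hs
    rw [(hderiv s hs).deriv]
    simp only [Real.mul_rpow ha.le hs.le]
    have hX : 0 < 1 + a ^ A * s ^ A := by positivity
    have hX1 : 0 < (1 + a ^ A * s ^ A) ^ (B - 1) := Real.rpow_pos_of_pos hX _
    have hY1 : 0 < a ^ (A - 1) := Real.rpow_pos_of_pos ha _
    have hY2 : 0 < s ^ (A - 1) := Real.rpow_pos_of_pos hs _
    have hZ : 0 < P * ((1 + a ^ A * s ^ A) ^ (B - 1) * (a ^ (A - 1) * s ^ (A - 1))) := by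
      positivity
    rw [abs_neg, abs_of_pos hZ]
    have e0 : (P * ((1 + a ^ A * s ^ A) ^ (B - 1) * (a ^ (A - 1) * s ^ (A - 1)))) ^ (p - 2)
        * (P * ((1 + a ^ A * s ^ A) ^ (B - 1) * (a ^ (A - 1) * s ^ (A - 1))))
        = (P * ((1 + a ^ A * s ^ A) ^ (B - 1) * (a ^ (A - 1) * s ^ (A - 1)))) ^ (p - 1) := by
      rw [show p - 1 = p - 2 + 1 by ring, Real.rpow_add_one hZ.ne']
    have e1 : (P * ((1 + a ^ A * s ^ A) ^ (B - 1) * (a ^ (A - 1) * s ^ (A - 1)))) ^ (p - 1)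
        = P ^ (p - 1) * ((1 + a ^ A * s ^ A) ^ H * (a ^ E * s ^ E)) := by
      rw [Real.mul_rpow hP0.le (by positivity), Real.mul_rpow hX1.le (by positivity),
        Real.mul_rpow hY1.le hY2.le, ← Real.rpow_mul hX.le, ← Real.rpow_mul ha.le,
        ← Real.rpow_mul hs.le, ← hEdef, ← hHdef]
    have e3 : s ^ (N - 1) * s ^ E = s ^ g := by
      rw [← Real.rpow_add hs, ← hgdef]
    calc s ^ (N - 1) * (P * ((1 + a ^ A * s ^ A) ^ (B - 1) * (a ^ (A - 1) * s ^ (A - 1)))) ^ (p - 2)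
          * -(P * ((1 + a ^ A * s ^ A) ^ (B - 1) * (a ^ (A - 1) * s ^ (A - 1))))
        = -(s ^ (N - 1) * ((P * ((1 + a ^ A * s ^ A) ^ (B - 1) * (a ^ (A - 1) * s ^ (A - 1)))) ^ (p - 2)
            * (P * ((1 + a ^ A * s ^ A) ^ (B - 1) * (a ^ (A - 1) * s ^ (A - 1)))))) := by ring
      _ = -(s ^ (N - 1) * (P ^ (p - 1) * ((1 + a ^ A * s ^ A) ^ H * (a ^ E * s ^ E)))) := by
            rw [e0, e1]
      _ = -(Q * (s ^ g * (1 + a ^ A * s ^ A) ^ H)) := by rw [← e3, hQdef]; ring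
  -- rewrite the outer derivative using the explicit formula
  have hEq : (fun s => s ^ (N - 1)
        * |deriv (fun t => C * a ^ (N / p - 1) * (1 + (a * t) ^ A) ^ B) s| ^ (p - 2)
        * deriv (fun t => C * a ^ (N / p - 1) * (1 + (a * t) ^ A) ^ B) s)
      =ᶠ[nhds r] (fun s => -(Q * (s ^ g * (1 + a ^ A * s ^ A) ^ H))) := by
    filter_upwards [Ioi_mem_nhds hr0] with s hs using hflux s hs
  rw [hEq.deriv_eq]
  -- derivative of the explicit power function
  have hT : 0 < 1 + a ^ A * r ^ A := by positivity
  have k1 : HasDerivAt (fun s : ℝ => s ^ g) (g * r ^ (g - 1)) r :=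
    Real.hasDerivAt_rpow_const (Or.inl hr0.ne')
  have k2 : HasDerivAt (fun s : ℝ => s ^ A) (A * r ^ (A - 1)) r :=
    Real.hasDerivAt_rpow_const (Or.inl hr0.ne')
  have k3 : HasDerivAt (fun s : ℝ => 1 + a ^ A * s ^ A) (a ^ A * (A * r ^ (A - 1))) r :=
    (k2.const_mul _).const_add 1
  have k4 : HasDerivAt (fun x : ℝ => x ^ H) (H * (1 + a ^ A * r ^ A) ^ (H - 1))
      (1 + a ^ A * r ^ A) := Real.hasDerivAt_rpow_const (Or.inl hT.ne')
  have k5 : HasDerivAt (fun s : ℝ => (1 + a ^ A * s ^ A) ^ H)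
      (H * (1 + a ^ A * r ^ A) ^ (H - 1) * (a ^ A * (A * r ^ (A - 1)))) r := by
    simpa [Function.comp_def] using k4.comp r k3
  have k6 := ((k1.mul k5).const_mul Q).neg
  rw [(show HasDerivAt (fun s : ℝ => -(Q * (s ^ g * (1 + a ^ A * s ^ A) ^ H))) _ r from k6).deriv]
  -- final algebraic identity
  have hra : (a * r) ^ A = a ^ A * r ^ A := Real.mul_rpow ha.le hr0.le
  rw [hra]
  have hrhs : (C * a ^ (N / p - 1) * (1 + a ^ A * r ^ A) ^ B) ^ (q - 1)
      = C ^ (q - 1) * a ^ ((N / p - 1) * (q - 1)) * (1 + a ^ A * r ^ A) ^ (B * (q - 1)) := by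
    rw [Real.mul_rpow (by positivity) (by positivity), Real.mul_rpow hC0.le haN.le,
      ← Real.rpow_mul ha.le, ← Real.rpow_mul hT.le]
  rw [hrhs, show N - 1 + (σ - 1) * q = g - 1 from I1.symm, show B * (q - 1) = H - 1 from I2.symm]
  have hQg : Q * g = C ^ (q - 1) * a ^ ((N / p - 1) * (q - 1)) := by
    have e : a ^ (N / p - 1) * a = a ^ (N / p) := by
      rw [← Real.rpow_add_one ha.ne']; congr 1; ring
    have hP : P = C * K0 * a ^ (N / p) := by
      rw [hPdef, ← hK0, ← e]; ring
    have hPp : P ^ (p - 1) = C ^ (p - 1) * K0 ^ (p - 1) * a ^ (N / p * (p - 1)) := by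
      rw [hP, Real.mul_rpow (by positivity) (Real.rpow_pos_of_pos ha _).le,
        Real.mul_rpow hC0.le hK00.le, ← Real.rpow_mul ha.le]
    have e3 : C ^ (p - 1) * M = C ^ (q - 1) := by
      rw [← hCqp, ← Real.rpow_add hC0]; congr 1; ring
    have e4 : a ^ (N / p * (p - 1)) * a ^ E = a ^ ((N / p - 1) * (q - 1)) := by
      rw [← Real.rpow_add ha, I5]
    calc Q * g = (C ^ (p - 1) * M) * (a ^ (N / p * (p - 1)) * a ^ E) := by
          rw [hQdef, hPp, hMdef]; ring
      _ = C ^ (q - 1) * a ^ ((N / p - 1) * (q - 1)) := by rw [e3, e4]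
  have hu1 := Real.rpow_add_one hT.ne' (H - 1)
  rw [show H - 1 + 1 = H by ring] at hu1
  have hu2 : r ^ g * r ^ (A - 1) = r ^ (g - 1) * r ^ A := by
    rw [← Real.rpow_add hr0, ← Real.rpow_add hr0]; congr 1; ring
  rw [hu1]
  linear_combination (-(r ^ (g - 1) * (1 + a ^ A * r ^ A) ^ (H - 1))) * hQg
    + (-(Q * (1 + a ^ A * r ^ A) ^ (H - 1) * H * a ^ A * A)) * hu2
    + (-(Q * (1 + a ^ A * r ^ A) ^ (H - 1) * r ^ (g - 1) * r ^ A * a ^ A)) * I3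
end
end
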